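/- Let γ = ((i₁ j₁),…,(i_k j_k)) ∈ Σ_n(k) and let l ∈ {1,…,k}. Then every element of C_{γ_{l−1}}(i_l + 1) is strictly greater than i_l. (Note that i_l + 1 ≤ n since i_l < j_l ≤ n.) -/

import Mathlib

/-- ℓ(σ): the number of cycles (orbits) of σ, including fixed points, counted via the
minimal representative of each orbit. -/
noncomputable def cycleCount {n : ℕ} (σ : Equiv.Perm (Fin n)) : ℕ :=
  Set.ncard {x : Fin n | ∀ y, σ.SameCycle x y → x ≤ y}

/-- |σ| := n − ℓ(σ). -/
noncomputable def normPerm {n : ℕ} (σ : Equiv.Perm (Fin n)) : ℕ := n - cycleCount σ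

/-- σ₁ ≼ σ₂ iff |σ₂| = |σ₁| + |σ₁⁻¹σ₂|. -/
def precLe {n : ℕ} (σ₁ σ₂ : Equiv.Perm (Fin n)) : Prop :=
  normPerm σ₂ = normPerm σ₁ + normPerm (σ₁⁻¹ * σ₂)

/-- Σ_n(k): tuples of k transpositions with |τ₁⋯τ_k| = k and τ₁⋯τ_k ≼ (1 … n). -/
def SigmaSet (n k : ℕ) : Set (Fin k → Equiv.Perm (Fin n)) :=
  {τ | (∀ l, (τ l).IsSwap) ∧ normPerm (List.ofFn τ).prod = k ∧
      precLe (List.ofFn τ).prod (finRotate n)}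

/-- γ_m := τ₁∘⋯∘τ_m, the product of the first m entries of the chain. -/
def gammaP {n k : ℕ} (τ : Fin k → Equiv.Perm (Fin n)) (m : ℕ) : Equiv.Perm (Fin n) :=
  ((List.ofFn τ).take m).prod

/-!
Write `π = γ_{l-1}` and `μ = π⁻¹ c`, so that `π μ = c`. Multiplying by a transposition merges two
cycles or splits one, so it changes the number of cycles by exactly one, and
`ℓ(σ) + ℓ(ρ) ≤ n + ℓ(σρ)`. Membership in `Σ_n(k)` therefore forces `ℓ(π) + ℓ(μ) = n + 1`, and
forces `i_l, j_l` into one cycle of `μ`, since `(i_l j_l) μ` has one cycle more than `μ`.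
If some `y ≤ i_l` lay in the cycle of `π` through `x = i_l + 1`, then `(y x) π` and `μ (i_l j_l)`
would each have one cycle more, for a total of `n + 3` cycles. But their product
`(y x) c (i_l j_l)` is a single cycle: `(y x) c` has the two cycles `[y, x)` and its complement,
and `(i_l j_l)` joins them. This contradicts the inequality above.
-/

namespace Equiv.Perm

section SameCycle

variable {α : Type*} [Finite α] {f g : Perm α} {x y : α}

theorem SameCycle.mem_of_mapsTo {s : Set α} (hs : Set.MapsTo f s s) (h : f.SameCycle x y)
    (hx : x ∈ s) : y ∈ s := by
  obtain ⟨m, -, rfl⟩ := h.exists_pow_eq'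
  rw [coe_pow]
  exact hs.iterate m hx

theorem SameCycle.of_forall_sameCycle_apply (h : ∀ z, g.SameCycle z (f z))
    (hxy : f.SameCycle x y) : g.SameCycle x y :=
  hxy.mem_of_mapsTo (s := {z | g.SameCycle x z}) (fun _ hz => hz.trans (h _)) .rfl

variable [DecidableEq α] {σ : Perm α} {a b : α}

theorem sameCycle_mul_swap_of_not_sameCycle (h : ¬σ.SameCycle a b) :
    (σ * swap a b).SameCycle a b := by
  have hσb : (σ * swap a b).SameCycle a (σ b) := by
    simpa using (SameCycle.refl (σ * swap a b) a).apply_right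
  have hS : Set.MapsTo σ {z | σ.SameCycle b z ∧ (σ * swap a b).SameCycle a z}
      {z | σ.SameCycle b z ∧ (σ * swap a b).SameCycle a z} := by
    rintro z ⟨hbz, haz⟩
    refine ⟨hbz.apply_right, ?_⟩
    have hza : z ≠ a := by rintro rfl; exact h hbz.symm
    by_cases hzb : z = b
    · exact hzb ▸ hσb
    · simpa [swap_apply_of_ne_of_ne hza hzb] using haz.apply_right
  exact ((sameCycle_apply_left.mpr .rfl : σ.SameCycle (σ b) b).mem_of_mapsTo hS
    ⟨sameCycle_apply_right.mpr .rfl, hσb⟩).2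

theorem SameCycle.mul_swap (hxy : σ.SameCycle x y) (h : ¬σ.SameCycle a b) :
    (σ * swap a b).SameCycle x y := by
  have hab := sameCycle_mul_swap_of_not_sameCycle h
  refine hxy.of_forall_sameCycle_apply fun z => ?_
  by_cases hza : z = a
  · subst hza; simpa using hab.apply_right
  by_cases hzb : z = b
  · subst hzb; simpa using hab.symm.apply_right
  simpa [swap_apply_of_ne_of_ne hza hzb] using (SameCycle.refl (σ * swap a b) z).apply_right

theorem SameCycle.of_mul_swap (h : (σ * swap a b).SameCycle x y) :
    σ.SameCycle x y ∨
      ((σ.SameCycle a x ∨ σ.SameCycle b x) ∧ (σ.SameCycle a y ∨ σ.SameCycle b y)) := by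
  set S : Set α := {z | σ.SameCycle a z ∨ σ.SameCycle b z}
  have hS : ∀ z ∈ S, (σ * swap a b) z ∈ S := by
    intro z hz
    suffices swap a b z ∈ S by simpa [S, sameCycle_apply_right] using this
    rw [swap_apply_def]
    split_ifs <;> simp_all [S, SameCycle.rfl]
  refine h.mem_of_mapsTo (s := {z | σ.SameCycle x z ∨ (x ∈ S ∧ z ∈ S)}) ?_ (.inl .rfl)
  rintro z (hxz | ⟨hx, hz⟩)
  · by_cases hz : z ∈ S
    · exact .inr ⟨hz.imp (·.trans hxz.symm) (·.trans hxz.symm), hS z hz⟩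
    have hza : z ≠ a := fun h => hz (.inl (h ▸ .rfl))
    have hzb : z ≠ b := fun h => hz (.inr (h ▸ .rfl))
    exact .inl (by simpa [swap_apply_of_ne_of_ne hza hzb] using hxz.apply_right)
  · exact .inr ⟨hx, hS z hz⟩

theorem sameCycle_mul_swap_iff (h : ¬σ.SameCycle a b) :
    (σ * swap a b).SameCycle x y ↔ σ.SameCycle x y ∨
      ((σ.SameCycle a x ∨ σ.SameCycle b x) ∧ (σ.SameCycle a y ∨ σ.SameCycle b y)) := by
  refine ⟨SameCycle.of_mul_swap, ?_⟩
  have hab := sameCycle_mul_swap_of_not_sameCycle h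
  have ha : ∀ z, σ.SameCycle a z ∨ σ.SameCycle b z → (σ * swap a b).SameCycle a z :=
    fun z hz => hz.elim (·.mul_swap h) fun hbz => hab.trans (hbz.mul_swap h)
  rintro (hxy | ⟨hx, hy⟩)
  · exact hxy.mul_swap h
  · exact (ha x hx).symm.trans (ha y hy)

theorem not_sameCycle_mul_swap_of_sameCycle (hab : a ≠ b) (h : σ.SameCycle a b) :
    ¬(σ * swap a b).SameCycle a b := by
  classical
  have hex : ∃ r, (σ ^ r) b = a := by
    obtain ⟨r, -, hr⟩ := h.symm.exists_pow_eq'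
    exact ⟨r, hr⟩
  set r := Nat.find hex
  have hr : (σ ^ r) b = a := Nat.find_spec hex
  have hr_min : ∀ t < r, (σ ^ t) b ≠ a := fun t ht => Nat.find_min hex ht
  have hr_pos : 0 < r := Nat.pos_of_ne_zero fun h0 => hab (by simpa [h0] using hr.symm)
  -- the `σ * swap a b`-orbit of `a` is the arc `σ b, σ² b, …, σ ^ r b = a`, which misses `b`
  set S : Set α := {z | ∃ t, 0 < t ∧ t ≤ r ∧ (σ ^ t) b = z}
  have hbS : b ∉ S := by
    rintro ⟨t, ht, htr, hb⟩
    refine hr_min (r - t) (by omega) ?_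
    rw [← hr, ← pow_sub_mul_pow σ htr, mul_apply, hb]
  have hS : Set.MapsTo (σ * swap a b) S S := by
    rintro _ ⟨t, ht, htr, rfl⟩
    rcases htr.lt_or_eq with htr | rfl
    · have hza : (σ ^ t) b ≠ a := hr_min t htr
      have hzb : (σ ^ t) b ≠ b := fun hb => hbS ⟨t, ht, htr.le, hb⟩
      refine ⟨t + 1, t.succ_pos, htr, ?_⟩
      rw [mul_apply, swap_apply_of_ne_of_ne hza hzb, pow_succ', mul_apply]
    · exact ⟨1, one_pos, hr_pos, by rw [hr, mul_apply, swap_apply_left, pow_one]⟩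
  exact fun hsc => hbS (hsc.mem_of_mapsTo hS ⟨r, hr_pos, le_rfl, hr⟩)

end SameCycle

section CycleMinima

variable {α : Type*} [LinearOrder α] {σ : Perm α} {x y : α}

def cycleMinima (σ : Perm α) : Set α := {x | ∀ y, σ.SameCycle x y → x ≤ y}

theorem exists_mem_cycleMinima_sameCycle [Finite α] (σ : Perm α) (x : α) :
    ∃ m ∈ cycleMinima σ, σ.SameCycle x m := by
  obtain ⟨m, hxm, hmin⟩ := Set.exists_min_image {y | σ.SameCycle x y} id (Set.toFinite _) ⟨x, .rfl⟩
  exact ⟨m, fun y hy => hmin y (hxm.trans hy), hxm⟩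

theorem eq_of_mem_cycleMinima (hx : x ∈ cycleMinima σ) (hy : y ∈ cycleMinima σ)
    (h : σ.SameCycle x y) : x = y :=
  le_antisymm (hx y h) (hy x h.symm)

theorem cycleMinima_inv : cycleMinima σ⁻¹ = cycleMinima σ := by
  simp only [cycleMinima, sameCycle_inv]

theorem cycleMinima_one : cycleMinima (1 : Perm α) = .univ :=
  Set.eq_univ_of_forall fun _ _ h => (sameCycle_one.mp h).le

theorem eq_one_of_cycleMinima_eq_univ (h : cycleMinima σ = .univ) : σ = 1 := by
  ext x
  have hx : x ∈ cycleMinima σ := h ▸ Set.mem_univ x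
  have hσx : σ x ∈ cycleMinima σ := h ▸ Set.mem_univ (σ x)
  simpa using (eq_of_mem_cycleMinima hx hσx (sameCycle_apply_right.mpr .rfl)).symm

theorem cycleMinima_mul_swap [Finite α] [DecidableEq α] {a b p q : α}
    (h : ¬σ.SameCycle a b) (hp : p ∈ cycleMinima σ) (hap : σ.SameCycle a p)
    (hq : q ∈ cycleMinima σ) (hbq : σ.SameCycle b q) (hpq : p ≤ q) :
    cycleMinima (σ * swap a b) = cycleMinima σ \ {q} := by
  have hpq : p < q := hpq.lt_of_ne fun e => h (hap.trans (e ▸ hbq.symm))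
  ext x
  constructor
  · intro hx
    refine ⟨fun y hy => hx y (hy.mul_swap h), fun (hxq : x = q) => hpq.not_ge ?_⟩
    subst hxq
    exact hx p ((sameCycle_mul_swap_iff h).mpr (.inr ⟨.inr hbq, .inl hap⟩))
  · rintro ⟨hx, hxq⟩ y hy
    rcases hy.of_mul_swap with hxy | ⟨hax | hbx, hay | hby⟩
    · exact hx y hxy
    · exact (eq_of_mem_cycleMinima hx hp (hax.symm.trans hap)).symm ▸ hp y (hap.symm.trans hay)
    · exact (eq_of_mem_cycleMinima hx hp (hax.symm.trans hap)).symm ▸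
        hpq.le.trans (hq y (hbq.symm.trans hby))
    all_goals exact absurd (eq_of_mem_cycleMinima hx hq (hbx.symm.trans hbq)) hxq

end CycleMinima

end Equiv.Perm

open Equiv Equiv.Perm

section CycleCount

variable {n : ℕ} {σ : Perm (Fin n)} {a b : Fin n}

theorem cycleCount_eq_ncard_cycleMinima (σ : Perm (Fin n)) :
    cycleCount σ = (cycleMinima σ).ncard := rfl

theorem cycleCount_le (σ : Perm (Fin n)) : cycleCount σ ≤ n :=
  (Set.ncard_le_card _).trans_eq (Nat.card_eq_fintype_card.trans (Fintype.card_fin n))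

theorem cycleCount_one : cycleCount (1 : Perm (Fin n)) = n := by
  simp [cycleCount_eq_ncard_cycleMinima, cycleMinima_one]

theorem eq_one_of_cycleCount_eq (h : cycleCount σ = n) : σ = 1 :=
  eq_one_of_cycleMinima_eq_univ <| Set.eq_of_subset_of_ncard_le (Set.subset_univ _)
    (by simp [← cycleCount_eq_ncard_cycleMinima, h])

theorem cycleCount_inv (σ : Perm (Fin n)) : cycleCount σ⁻¹ = cycleCount σ := by
  rw [cycleCount_eq_ncard_cycleMinima, cycleMinima_inv, cycleCount_eq_ncard_cycleMinima]

theorem cycleCount_mul_swap_of_not_sameCycle (h : ¬σ.SameCycle a b) :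
    cycleCount (σ * swap a b) + 1 = cycleCount σ := by
  obtain ⟨p, hp, hap⟩ := exists_mem_cycleMinima_sameCycle σ a
  obtain ⟨q, hq, hbq⟩ := exists_mem_cycleMinima_sameCycle σ b
  wlog hpq : p ≤ q generalizing a b p q
  · rw [swap_comm]
    exact this (fun h' => h h'.symm) q hq hbq p hp hap (le_of_not_ge hpq)
  rw [cycleCount_eq_ncard_cycleMinima, cycleMinima_mul_swap h hp hap hq hbq hpq,
    Set.ncard_sdiff_singleton_add_one hq (Set.toFinite _), cycleCount_eq_ncard_cycleMinima]

theorem cycleCount_mul_swap_of_sameCycle (hab : a ≠ b) (h : σ.SameCycle a b) :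
    cycleCount (σ * swap a b) = cycleCount σ + 1 := by
  simpa [mul_assoc] using
    (cycleCount_mul_swap_of_not_sameCycle (not_sameCycle_mul_swap_of_sameCycle hab h)).symm

theorem cycleCount_swap_mul_of_not_sameCycle (h : ¬σ.SameCycle a b) :
    cycleCount (swap a b * σ) + 1 = cycleCount σ := by
  rw [← cycleCount_inv, mul_inv_rev, swap_inv, ← cycleCount_inv σ]
  exact cycleCount_mul_swap_of_not_sameCycle (sameCycle_inv.not.mpr h)

theorem cycleCount_swap_mul_of_sameCycle (hab : a ≠ b) (h : σ.SameCycle a b) :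
    cycleCount (swap a b * σ) = cycleCount σ + 1 := by
  rw [← cycleCount_inv, mul_inv_rev, swap_inv, ← cycleCount_inv σ]
  exact cycleCount_mul_swap_of_sameCycle hab (sameCycle_inv.mpr h)

theorem cycleCount_le_cycleCount_swap_mul_add_one (σ : Perm (Fin n)) (a b : Fin n) :
    cycleCount σ ≤ cycleCount (swap a b * σ) + 1 := by
  by_cases h : σ.SameCycle a b
  · rcases eq_or_ne a b with rfl | hab
    · rw [swap_self, ← Perm.one_def, one_mul]
      omega
    · rw [cycleCount_swap_mul_of_sameCycle hab h]
      omega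
  · rw [cycleCount_swap_mul_of_not_sameCycle h]

theorem cycleCount_le_cycleCount_prod_mul_add_length (σ : Perm (Fin n)) {l : List (Perm (Fin n))}
    (hl : ∀ t ∈ l, t.IsSwap) : cycleCount σ ≤ cycleCount (l.prod * σ) + l.length := by
  induction l generalizing σ with
  | nil => simp
  | cons t l ih =>
    obtain ⟨a, b, -, rfl⟩ := hl t List.mem_cons_self
    have := ih σ fun t ht => hl t (List.mem_cons_of_mem _ ht)
    have := cycleCount_le_cycleCount_swap_mul_add_one (l.prod * σ) a b
    rw [List.prod_cons, mul_assoc, List.length_cons]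
    omega

theorem exists_list_isSwap_prod_eq (σ : Perm (Fin n)) :
    ∃ l : List (Perm (Fin n)), (∀ t ∈ l, t.IsSwap) ∧ l.prod = σ ∧
      cycleCount σ + l.length = n := by
  obtain ⟨d, hd⟩ : ∃ d, cycleCount σ + d = n := ⟨_, Nat.add_sub_of_le (cycleCount_le σ)⟩
  induction d generalizing σ with
  | zero => exact ⟨[], by simp, by simp [eq_one_of_cycleCount_eq hd], hd⟩
  | succ d ih =>
    obtain ⟨x, hx⟩ : ∃ x, σ x ≠ x := by
      by_contra! hσ
      rw [show σ = 1 from Equiv.ext hσ, cycleCount_one] at hd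
      omega
    have hsplit := cycleCount_swap_mul_of_sameCycle hx.symm (sameCycle_apply_right.mpr .rfl)
    obtain ⟨l, hl, hprod, hlen⟩ := ih (swap x (σ x) * σ) (by omega)
    refine ⟨swap x (σ x) :: l, ?_, by rw [List.prod_cons, hprod, swap_mul_self_mul],
      by rw [List.length_cons]; omega⟩
    exact List.forall_mem_cons.mpr ⟨⟨x, σ x, hx.symm, rfl⟩, hl⟩

theorem cycleCount_add_cycleCount_le (σ ρ : Perm (Fin n)) :
    cycleCount σ + cycleCount ρ ≤ n + cycleCount (σ * ρ) := by
  obtain ⟨l, hl, rfl, hlen⟩ := exists_list_isSwap_prod_eq σ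
  have := cycleCount_le_cycleCount_prod_mul_add_length ρ hl
  omega

end CycleCount

section FinRotate

variable {n : ℕ}

theorem sameCycle_finRotate (u v : Fin n) : (finRotate n).SameCycle u v := by
  have := u.neZero
  refine ⟨(v - u : Fin n).val, ?_⟩
  rw [zpow_natCast, coe_pow, ← finCycle_eq_finRotate_iterate, finCycle_apply, add_sub_cancel]

theorem cycleCount_finRotate [NeZero n] : cycleCount (finRotate n) = 1 := by
  rw [cycleCount_eq_ncard_cycleMinima, Set.ncard_eq_one]
  refine ⟨0, Set.eq_singleton_iff_unique_mem.mpr ⟨fun y _ => Fin.zero_le y, fun x hx => ?_⟩⟩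
  exact le_antisymm (hx 0 (sameCycle_finRotate x 0)) (Fin.zero_le x)

theorem mapsTo_swap_mul_finRotate_Ico {u v : Fin n} (huv : u < v) :
    Set.MapsTo (swap u v * finRotate n) (Set.Ico u v) (Set.Ico u v) := by
  rintro t ⟨hut, htv⟩
  have := t.neZero
  rw [Fin.le_def] at hut
  rw [Fin.lt_def] at htv
  have hrot : (finRotate n t).val = t.val + 1 := by
    rw [finRotate_apply]
    exact Fin.val_add_one_of_lt' (by omega)
  rw [mul_apply]
  by_cases hv : finRotate n t = v
  · rw [hv, swap_apply_right]
    exact ⟨le_rfl, huv⟩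
  · have hu : finRotate n t ≠ u := fun h => by
      have := congrArg Fin.val h
      omega
    rw [swap_apply_of_ne_of_ne hu hv]
    exact ⟨Fin.le_def.mpr (by omega), lt_of_le_of_ne (Fin.le_def.mpr (by omega)) hv⟩

end FinRotate

section SigmaSet

variable {n k : ℕ} {τ : Fin k → Perm (Fin n)}

theorem gammaP_succ (τ : Fin k → Perm (Fin n)) (l : Fin k) :
    gammaP τ (l + 1) = gammaP τ l * τ l := by
  simp [gammaP, List.take_add_one]

theorem cycleCount_gammaP_of_mem_SigmaSet [NeZero n] (hτ : τ ∈ SigmaSet n k) {m : ℕ}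
    (hm : m ≤ k) : cycleCount (gammaP τ m) + m = n ∧
      cycleCount ((gammaP τ m)⁻¹ * finRotate n) = m + 1 := by
  obtain ⟨hswap, hnorm, hprec⟩ := hτ
  simp only [precLe, normPerm, cycleCount_finRotate] at hnorm hprec
  have hswap' : ∀ t ∈ List.ofFn τ, t.IsSwap := by simpa [List.mem_ofFn] using hswap
  set γ := gammaP τ m
  have hsplit : γ * ((List.ofFn τ).drop m).prod = (List.ofFn τ).prod :=
    List.prod_take_mul_prod_drop _ _
  have hγ : n ≤ cycleCount γ + m := by
    simpa [γ, gammaP, cycleCount_one, hm] using cycleCount_le_cycleCount_prod_mul_add_length 1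
      (l := (List.ofFn τ).take m) fun t ht => hswap' t (List.mem_of_mem_take ht)
  have hμ : cycleCount ((List.ofFn τ).prod⁻¹ * finRotate n) ≤
      cycleCount (γ⁻¹ * finRotate n) + (k - m) := by
    have := cycleCount_le_cycleCount_prod_mul_add_length ((List.ofFn τ).prod⁻¹ * finRotate n)
      (l := (List.ofFn τ).drop m) fun t ht => hswap' t (List.mem_of_mem_drop ht)
    rw [← hsplit, mul_inv_rev, mul_assoc] at this ⊢
    rwa [mul_inv_cancel_left, List.length_drop, List.length_ofFn] at this
  have htri := cycleCount_add_cycleCount_le γ (γ⁻¹ * finRotate n)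
  rw [mul_inv_cancel_left, cycleCount_finRotate] at htri
  have := cycleCount_le (List.ofFn τ).prod
  have := cycleCount_le ((List.ofFn τ).prod⁻¹ * finRotate n)
  have := NeZero.pos n
  omega

theorem sameCycle_gammaP_inv_mul_finRotate [NeZero n] (hτ : τ ∈ SigmaSet n k) (l : Fin k)
    {a b : Fin n} (hl : τ l = swap a b) : ((gammaP τ l)⁻¹ * finRotate n).SameCycle a b := by
  by_contra h
  have hmerge := cycleCount_swap_mul_of_not_sameCycle h
  rw [← mul_assoc, ← swap_inv, ← mul_inv_rev, ← hl, ← gammaP_succ,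
    (cycleCount_gammaP_of_mem_SigmaSet hτ l.isLt).2,
    (cycleCount_gammaP_of_mem_SigmaSet hτ l.isLt.le).2] at hmerge
  omega

end SigmaSet

theorem lt_of_sameCycle_of_cycleCount_add_cycleCount_eq {n : ℕ} {π : Perm (Fin n)}
    {a b x y : Fin n} (hcount : cycleCount π + cycleCount (π⁻¹ * finRotate n) = n + 1)
    (hab : a < b) (hμ : (π⁻¹ * finRotate n).SameCycle a b) (hx : (x : ℕ) = a + 1)
    (hxy : π.SameCycle x y) : a < y := by
  by_contra! hya
  have := a.neZero
  rw [Fin.le_def] at hya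
  rw [Fin.lt_def] at hab
  have hyx : y < x := Fin.lt_def.mpr (by omega)
  have hπ := cycleCount_swap_mul_of_sameCycle hyx.ne hxy.symm
  have hμ' := cycleCount_mul_swap_of_sameCycle (Fin.ne_of_val_ne hab.ne) hμ
  -- `swap y x * finRotate n` has the two cycles `[y, x)` and its complement; `swap a b` joins them
  have hsep : ¬(swap y x * finRotate n).SameCycle a b := fun h => by
    have hbx := (h.mem_of_mapsTo (mapsTo_swap_mul_finRotate_Ico hyx)
      ⟨Fin.le_def.mpr hya, Fin.lt_def.mpr (by omega)⟩).2
    rw [Fin.lt_def] at hbx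
    omega
  have htwo := cycleCount_swap_mul_of_sameCycle hyx.ne (sameCycle_finRotate y x)
  have hone := cycleCount_mul_swap_of_not_sameCycle hsep
  have htri := cycleCount_add_cycleCount_le (swap y x * π) (π⁻¹ * finRotate n * swap a b)
  rw [show swap y x * π * (π⁻¹ * finRotate n * swap a b) = swap y x * finRotate n * swap a b by
    group] at htri
  rw [cycleCount_finRotate] at htwo
  omega

/-- If γ = ((i₁ j₁),…,(i_k j_k)) ∈ Σ_n(k) and l ∈ {1,…,k}, then every element of the cycle of
γ_{l−1} containing i_l + 1 is strictly greater than i_l. -/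
theorem stmt5 (n k : ℕ) (i j : Fin k → Fin n) (hij : ∀ l, i l < j l)
    (hγ : (fun l => Equiv.swap (i l) (j l)) ∈ SigmaSet n k) (l : Fin k)
    (x : Fin n) (hx : (x : ℕ) = (i l : ℕ) + 1) :
    ∀ y, (gammaP (fun m => Equiv.swap (i m) (j m)) (l : ℕ)).SameCycle x y → i l < y := by
  intro y hxy
  have := x.neZero
  obtain ⟨hπ, hμ⟩ := cycleCount_gammaP_of_mem_SigmaSet hγ l.isLt.le
  exact lt_of_sameCycle_of_cycleCount_add_cycleCount_eq (by omega) (hij l)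
    (sameCycle_gammaP_inv_mul_finRotate hγ l rfl) hx hxy
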